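/- Let (x_k) be a sequence in B̄(a,ρ) and (t_k) a sequence of positive reals such that H(x_k) ≠ 0 and x_{k+1} = x_k − t_k·H(x_k)/‖H(x_k)‖ for every k (subgradient algorithm). If t_k → 0 and ∑ t_k = +∞, then infDist(x_k, 𝔐_μ) → 0 and f(x_k) → f_*. -/

import Mathlib

/-!
`f` is convex and 1-Lipschitz, and `H(x)` is a subgradient of `f` at `x` of norm at most `1`, so
for every minimizer `y` the normalized step satisfies
`‖x_{k+1} - y‖² ≤ ‖x_k - y‖² - 2 t_k (f(x_k) - f_*) + t_k²`.
By compactness of the ball, `f - f_*` is at least some `δ > 0` at distance `≥ ε` from the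
minimizers; once `t_k ≤ δ`, every step taken that far away therefore decreases the squared
distance to the minimizers by `δ t_k`. As `∑ t_k = ∞`, the iterates eventually come within `ε`,
and from then on they stay within `2ε`: far points move closer, and near points move at most
`t_k ≤ ε`. Convergence of `f(x_k)` follows from the Lipschitz bound `f(z) - f_* ≤ infDist(z, 𝔐_μ)`.
-/

open MeasureTheory Metric Filter

open scoped RealInnerProductSpace

section InnerProductGeometry

variable {E : Type*} [NormedAddCommGroup E] [InnerProductSpace ℝ E]

theorem norm_sub_norm_le_inner_inv_norm_smul (u v : E) : ‖u‖ - ‖v‖ ≤ ⟪‖u‖⁻¹ • u, u - v⟫ := by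
  have hu : ⟪‖u‖⁻¹ • u, u⟫ = ‖u‖ := by
    rcases eq_or_ne u 0 with rfl | hu
    · simp
    · rw [real_inner_smul_left, real_inner_self_eq_norm_sq]
      field_simp [norm_ne_zero_iff.mpr hu]
  have hv : ⟪‖u‖⁻¹ • u, v⟫ ≤ ‖v‖ :=
    calc ⟪‖u‖⁻¹ • u, v⟫ ≤ ‖‖u‖⁻¹ • u‖ * ‖v‖ := real_inner_le_norm _ _
      _ ≤ 1 * ‖v‖ := by
        gcongr
        exact mem_closedBall_zero_iff.mp (inv_norm_smul_mem_unitClosedBall u)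
      _ = ‖v‖ := one_mul _
  rw [inner_sub_right, hu]
  linarith

theorem norm_div_norm_smul {t : ℝ} (ht : 0 ≤ t) {g : E} (hg : g ≠ 0) : ‖(t / ‖g‖) • g‖ = t := by
  rw [norm_smul, Real.norm_of_nonneg (by positivity), div_mul_cancel₀ _ (norm_ne_zero_iff.mpr hg)]

theorem norm_sub_div_norm_smul_sub_sq_le {x y g : E} {t c : ℝ} (ht : 0 ≤ t) (hg : g ≠ 0)
    (hg1 : ‖g‖ ≤ 1) (hc : 0 ≤ c) (hcg : c ≤ ⟪g, x - y⟫) :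
    ‖x - (t / ‖g‖) • g - y‖ ^ 2 ≤ ‖x - y‖ ^ 2 - 2 * t * c + t ^ 2 := by
  have hgpos : 0 < ‖g‖ := norm_pos_iff.mpr hg
  have hdecrease : t * c ≤ t / ‖g‖ * ⟪g, x - y⟫ :=
    calc t * c ≤ t / ‖g‖ * c := by gcongr; exact le_div_self ht hgpos hg1
      _ ≤ t / ‖g‖ * ⟪g, x - y⟫ := by gcongr
  rw [sub_right_comm, norm_sub_sq_real, norm_div_norm_smul ht hg, real_inner_smul_right,
    real_inner_comm]
  linarith

end InnerProductGeometry

section MeanDistance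

variable {E : Type*} [NormedAddCommGroup E] [MeasurableSpace E] {μ : Measure E}

noncomputable def meanDist (μ : Measure E) (x : E) : ℝ :=
  ∫ p, ‖x - p‖ ∂μ

/-- The integrand vanishes at `p = x` (as `‖0‖⁻¹ • 0 = 0`), so integrating over `{x}ᶜ` or over the
whole space gives the same vector. -/
noncomputable def meanUnitVec [NormedSpace ℝ E] (μ : Measure E) (x : E) : E :=
  ∫ p, ‖x - p‖⁻¹ • (x - p) ∂μ

theorem integrable_norm_sub_of_ae_mem_ball [OpensMeasurableSpace E] [IsFiniteMeasure μ] {a : E}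
    {ρ : ℝ} (hb : ∀ᵐ p ∂μ, p ∈ ball a ρ) (x : E) : Integrable (fun p => ‖x - p‖) μ := by
  refine Integrable.of_bound (continuous_const.sub continuous_id).norm.aestronglyMeasurable
    (‖x - a‖ + ρ) ?_
  filter_upwards [hb] with p hp
  have hap : ‖a - p‖ < ρ := by rw [← dist_eq_norm]; exact mem_ball'.mp hp
  rw [norm_norm]
  linarith [norm_sub_le_norm_sub_add_norm_sub x a p]

theorem lipschitzWith_meanDist [IsProbabilityMeasure μ]
    (hint : ∀ x, Integrable (fun p => ‖x - p‖) μ) : LipschitzWith 1 (meanDist μ) := by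
  refine LipschitzWith.of_le_add fun x y => ?_
  calc meanDist μ x ≤ ∫ p, (‖y - p‖ + dist x y) ∂μ := by
        refine integral_mono (hint x) ((hint y).add (integrable_const _)) fun p => ?_
        rw [dist_eq_norm]
        linarith [norm_sub_le_norm_sub_add_norm_sub x y p]
    _ = meanDist μ y + dist x y := by
        rw [integral_add (hint y) (integrable_const _), integral_const, probReal_univ, one_smul,
          meanDist]

theorem meanUnitVec_eq_setIntegral_compl [NormedSpace ℝ E] (x : E) :
    meanUnitVec μ x = ∫ p in ({x}ᶜ : Set E), ‖x - p‖⁻¹ • (x - p) ∂μ :=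
  (setIntegral_eq_integral_of_forall_compl_eq_zero fun p hp => by
    rw [Set.notMem_compl_iff, Set.mem_singleton_iff] at hp
    simp [hp]).symm

theorem norm_meanUnitVec_le_one [NormedSpace ℝ E] [IsProbabilityMeasure μ] (x : E) :
    ‖meanUnitVec μ x‖ ≤ 1 := by
  have h := norm_integral_le_of_norm_le_const (μ := μ) (C := 1)
    (Eventually.of_forall fun p => mem_closedBall_zero_iff.mp
      (inv_norm_smul_mem_unitClosedBall (x - p)))
  rwa [probReal_univ, mul_one] at h

variable [BorelSpace E] [SecondCountableTopology E]

theorem integrable_inv_norm_smul_sub [NormedSpace ℝ E] [IsFiniteMeasure μ] (x : E) :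
    Integrable (fun p => ‖x - p‖⁻¹ • (x - p)) μ := by
  refine Integrable.of_bound (((measurable_const.sub measurable_id).norm.inv).smul
    (measurable_const.sub measurable_id)).aestronglyMeasurable 1 (Eventually.of_forall fun p => ?_)
  exact mem_closedBall_zero_iff.mp (inv_norm_smul_mem_unitClosedBall _)

theorem meanDist_sub_le_inner [InnerProductSpace ℝ E] [CompleteSpace E] [IsFiniteMeasure μ]
    {x y : E} (hx : Integrable (fun p => ‖x - p‖) μ) (hy : Integrable (fun p => ‖y - p‖) μ) :
    meanDist μ x - meanDist μ y ≤ ⟪meanUnitVec μ x, x - y⟫ := by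
  rw [meanDist, meanDist, ← integral_sub hx hy, meanUnitVec, real_inner_comm,
    ← integral_inner (integrable_inv_norm_smul_sub x)]
  refine integral_mono (hx.sub hy)
    ((innerSL ℝ (x - y)).integrable_comp (integrable_inv_norm_smul_sub x)) fun p => ?_
  simpa [real_inner_comm] using norm_sub_norm_le_inner_inv_norm_smul (x - p) (y - p)

end MeanDistance

section RealSequences

theorem not_eventually_le_sub_mul_of_tendsto_sum {u t : ℕ → ℝ} {δ : ℝ} (hδ : 0 < δ)
    (hu : ∀ k, 0 ≤ u k) (htsum : Tendsto (fun m => ∑ k ∈ Finset.range m, t k) atTop atTop) :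
    ¬∀ᶠ k in atTop, u (k + 1) ≤ u k - δ * t k := by
  intro hdesc
  obtain ⟨N, hN⟩ := eventually_atTop.mp hdesc
  set v : ℕ → ℝ := fun m => u m + δ * ∑ k ∈ Finset.range m, t k
  have hv_le : ∀ m ≥ N, v m ≤ v N := by
    intro m hm
    induction m, hm using Nat.le_induction with
    | base => rfl
    | succ m hm ih =>
      refine le_trans ?_ ih
      simp only [v, Finset.sum_range_succ]
      linarith [hN m hm]
  have hv : Tendsto v atTop atTop :=
    tendsto_atTop_add_left_of_le _ 0 hu (htsum.const_mul_atTop hδ)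
  obtain ⟨m, hm, hmN⟩ := ((hv.eventually_gt_atTop (v N)).and (eventually_ge_atTop N)).exists
  exact (hv_le m hmN).not_gt hm

theorem tendsto_zero_of_sq_descent {d t : ℕ → ℝ} (hd : ∀ k, 0 ≤ d k) (ht : ∀ k, 0 ≤ t k)
    (ht0 : Tendsto t atTop (nhds 0))
    (htsum : Tendsto (fun m => ∑ k ∈ Finset.range m, t k) atTop atTop)
    (hstep : ∀ k, d (k + 1) ≤ d k + t k)
    (hdesc : ∀ ε > 0, ∃ δ > 0, ∀ᶠ k in atTop, ε ≤ d k → d (k + 1) ^ 2 ≤ d k ^ 2 - δ * t k) :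
    Tendsto d atTop (nhds 0) := by
  refine tendsto_order.2 ⟨fun b hb => Eventually.of_forall fun k => hb.trans_le (hd k),
    fun ε hε => ?_⟩
  obtain ⟨δ, hδ, hdesc⟩ := hdesc (ε / 3) (by positivity)
  obtain ⟨N, hN⟩ := eventually_atTop.mp (hdesc.and (ht0.eventually (ge_mem_nhds
    (by positivity : (0 : ℝ) < ε / 3))))
  have hclose : ∃ᶠ k in atTop, d k < ε / 3 := fun hfar =>
    not_eventually_le_sub_mul_of_tendsto_sum hδ (fun k => sq_nonneg (d k)) htsum <|
      (hfar.and (eventually_ge_atTop N)).mono fun k hk => (hN k hk.2).1 (not_lt.mp hk.1)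
  obtain ⟨k₀, hk₀N, hk₀⟩ := frequently_atTop.mp hclose N
  have hstay : ∀ k ≥ k₀, d k ≤ 2 * (ε / 3) := by
    intro k hk
    induction k, hk using Nat.le_induction with
    | base => linarith
    | succ k hk ih =>
      obtain ⟨hdk, htk⟩ := hN k (hk₀N.trans hk)
      rcases lt_or_ge (d k) (ε / 3) with hnear | hfar
      · linarith [hstep k]
      · have hsq : d (k + 1) ^ 2 ≤ d k ^ 2 := (hdk hfar).trans (by nlinarith [ht k])
        exact ((pow_le_pow_iff_left₀ (hd _) (hd _) two_ne_zero).mp hsq).trans ih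
  exact eventually_atTop.2 ⟨k₀, fun k hk => by linarith [hstay k hk]⟩

end RealSequences

section Minimizers

variable {α : Type*} [MetricSpace α] {f : α → ℝ} {K : Set α} {y₀ : α}

theorem isCompact_setOf_isMinOn (hK : IsCompact K) (hf : ContinuousOn f K) (hy₀K : y₀ ∈ K)
    (hy₀ : IsMinOn f K y₀) : IsCompact {y ∈ K | IsMinOn f K y} := by
  have hM : {y ∈ K | IsMinOn f K y} = K ∩ f ⁻¹' Set.Iic (f y₀) := by
    ext y
    exact ⟨fun hy => ⟨hy.1, hy.2 hy₀K⟩,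
      fun hy => ⟨hy.1, fun z hz => (show f y ≤ f y₀ from hy.2).trans (hy₀ hz)⟩⟩
  rw [hM]
  exact hK.of_isClosed_subset (hf.preimage_isClosed_of_isClosed hK.isClosed isClosed_Iic)
    Set.inter_subset_left

theorem exists_pos_add_le_of_le_infDist_setOf_isMinOn (hK : IsCompact K) (hf : ContinuousOn f K)
    (hy₀ : IsMinOn f K y₀) {ε : ℝ} (hε : 0 < ε) :
    ∃ δ > 0, ∀ z ∈ K, ε ≤ infDist z {y ∈ K | IsMinOn f K y} → f y₀ + δ ≤ f z := by
  set M := {y ∈ K | IsMinOn f K y}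
  have hfar : IsCompact {z ∈ K | ε ≤ infDist z M} :=
    hK.of_isClosed_subset (hK.isClosed.inter (isClosed_le continuous_const
      (continuous_infDist_pt M))) fun z hz => hz.1
  obtain ⟨b, hb, hbf⟩ := hfar.exists_forall_le' (hf.mono fun z hz => hz.1) (a := f y₀) <| by
    rintro z ⟨hzK, hzε⟩
    by_contra! hz
    have hzM : z ∈ M := ⟨hzK, fun w hw => hz.trans (hy₀ hw)⟩
    rw [infDist_zero_of_mem hzM] at hzε
    linarith
  exact ⟨b - f y₀, by linarith, fun z hz hzε => by linarith [hbf z ⟨hz, hzε⟩]⟩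

theorem tendsto_of_tendsto_infDist_setOf_isMinOn {L : NNReal} (hK : IsCompact K)
    (hf : LipschitzWith L f) (hy₀K : y₀ ∈ K) (hy₀ : IsMinOn f K y₀) {x : ℕ → α}
    (hxK : ∀ k, x k ∈ K)
    (hx : Tendsto (fun k => infDist (x k) {y ∈ K | IsMinOn f K y}) atTop (nhds 0)) :
    Tendsto (fun k => f (x k)) atTop (nhds (f y₀)) := by
  have hM := isCompact_setOf_isMinOn hK hf.continuous.continuousOn hy₀K hy₀
  have hgap : ∀ z, f z - f y₀ ≤ L * infDist z {y ∈ K | IsMinOn f K y} := by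
    intro z
    obtain ⟨y, hyM, hyd⟩ := hM.exists_infDist_eq_dist ⟨y₀, hy₀K, hy₀⟩ z
    rw [hyd]
    linarith [show f y ≤ f y₀ from hyM.2 hy₀K, (le_abs_self _).trans (hf.dist_le_mul z y)]
  have hsub : Tendsto (fun k => f (x k) - f y₀) atTop (nhds 0) :=
    squeeze_zero (fun k => sub_nonneg.mpr (hy₀ (hxK k))) (fun k => hgap (x k))
      (by simpa using hx.const_mul (L : ℝ))
  simpa using hsub.add_const (f y₀)

end Minimizers

section SubgradientMethod

variable {E : Type*} [NormedAddCommGroup E] [InnerProductSpace ℝ E]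

theorem tendsto_infDist_setOf_isMinOn_of_subgradient_step {K : Set E} (hK : IsCompact K)
    {f : E → ℝ} (hf : ContinuousOn f K) {g : E → E}
    (hsub : ∀ x ∈ K, ∀ y ∈ K, f x - f y ≤ ⟪g x, x - y⟫) (hg1 : ∀ x ∈ K, ‖g x‖ ≤ 1)
    {x : ℕ → E} {t : ℕ → ℝ} (hxK : ∀ k, x k ∈ K) (hgx : ∀ k, g (x k) ≠ 0)
    (hrec : ∀ k, x (k + 1) = x k - (t k / ‖g (x k)‖) • g (x k)) (ht : ∀ k, 0 ≤ t k)
    (ht0 : Tendsto t atTop (nhds 0))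
    (htsum : Tendsto (fun m => ∑ k ∈ Finset.range m, t k) atTop atTop) :
    Tendsto (fun k => infDist (x k) {y ∈ K | IsMinOn f K y}) atTop (nhds 0) := by
  set M := {y ∈ K | IsMinOn f K y}
  obtain ⟨y₀, hy₀K, hy₀⟩ := hK.exists_isMinOn ⟨x 0, hxK 0⟩ hf
  have hM := isCompact_setOf_isMinOn hK hf hy₀K hy₀
  refine tendsto_zero_of_sq_descent (fun k => infDist_nonneg) ht ht0 htsum (fun k => ?_)
    (fun ε hε => ?_)
  · calc infDist (x (k + 1)) M ≤ infDist (x k) M + dist (x (k + 1)) (x k) :=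
          infDist_le_infDist_add_dist
      _ = infDist (x k) M + t k := by
          rw [dist_eq_norm, hrec k, sub_sub_cancel_left, norm_neg,
            norm_div_norm_smul (ht k) (hgx k)]
  obtain ⟨δ, hδ, hgap⟩ := exists_pos_add_le_of_le_infDist_setOf_isMinOn hK hf hy₀ hε
  refine ⟨δ, hδ, (ht0.eventually (ge_mem_nhds hδ)).mono fun k htk hfar => ?_⟩
  obtain ⟨y, hyM, hyd⟩ := hM.exists_infDist_eq_dist ⟨y₀, hy₀K, hy₀⟩ (x k)
  have hfk : δ ≤ f (x k) - f y := by
    linarith [hgap (x k) (hxK k) hfar, show f y ≤ f y₀ from hyM.2 hy₀K]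
  have hdesc := norm_sub_div_norm_smul_sub_sq_le (ht k) (hgx k) (hg1 _ (hxK k))
    (hδ.le.trans hfk) (hsub _ (hxK k) _ hyM.1)
  calc infDist (x (k + 1)) M ^ 2 ≤ ‖x (k + 1) - y‖ ^ 2 := by
        rw [← dist_eq_norm]
        gcongr
        · exact infDist_nonneg
        · exact infDist_le_dist_of_mem hyM
    _ ≤ ‖x k - y‖ ^ 2 - 2 * t k * (f (x k) - f y) + t k ^ 2 := hrec k ▸ hdesc
    _ ≤ infDist (x k) M ^ 2 - δ * t k := by
        rw [hyd, dist_eq_norm]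
        nlinarith [ht k]

end SubgradientMethod

theorem stmt13_general {n : ℕ} (a : EuclideanSpace ℝ (Fin n)) (ρ : ℝ)
    (μ : Measure (EuclideanSpace ℝ (Fin n))) [IsProbabilityMeasure μ]
    (hsupp : {x : EuclideanSpace ℝ (Fin n) | ∀ U ∈ nhds x, 0 < μ U} ⊆ ball a ρ)
    (f : EuclideanSpace ℝ (Fin n) → ℝ)
    (hf : ∀ x, f x = ∫ p, ‖x - p‖ ∂μ)
    (H : EuclideanSpace ℝ (Fin n) → EuclideanSpace ℝ (Fin n))
    (hH : ∀ x, H x = ∫ p in ({x}ᶜ : Set (EuclideanSpace ℝ (Fin n))), ‖x - p‖⁻¹ • (x - p) ∂μ)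
    (fstar : ℝ) (hfstar : fstar = sInf (f '' closedBall a ρ))
    (M : Set (EuclideanSpace ℝ (Fin n)))
    (hM : M = {y ∈ closedBall a ρ | IsMinOn f (closedBall a ρ) y})
    (x : ℕ → EuclideanSpace ℝ (Fin n)) (t : ℕ → ℝ)
    (hxball : ∀ k, x k ∈ closedBall a ρ)
    (hHx : ∀ k, H (x k) ≠ 0)
    (hrec : ∀ k, x (k + 1) = x k - (t k / ‖H (x k)‖) • H (x k))
    (htpos : ∀ k, 0 < t k)
    (ht0 : Tendsto t atTop (nhds 0))
    (htsum : Tendsto (fun m => ∑ k ∈ Finset.range m, t k) atTop atTop) :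
    Tendsto (fun k => infDist (x k) M) atTop (nhds 0) ∧
    Tendsto (fun k => f (x k)) atTop (nhds fstar) := by
  have hb : ∀ᵐ p ∂μ, p ∈ ball a ρ := mem_of_superset Measure.support_mem_ae
    fun p hp => hsupp ((Measure.mem_support_iff_forall p).mp hp)
  have hint := integrable_norm_sub_of_ae_mem_ball hb
  obtain rfl : f = meanDist μ := funext hf
  obtain rfl : H = meanUnitVec μ :=
    funext fun y => (hH y).trans (meanUnitVec_eq_setIntegral_compl y).symm
  have hlip := lipschitzWith_meanDist hint
  have hK := isCompact_closedBall a ρ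
  obtain ⟨y₀, hy₀K, hy₀⟩ := hK.exists_isMinOn ⟨x 0, hxball 0⟩ hlip.continuous.continuousOn
  have hfstar₀ : fstar = meanDist μ y₀ :=
    hfstar.trans (IsLeast.csInf_eq ⟨Set.mem_image_of_mem _ hy₀K, Set.forall_mem_image.2 hy₀⟩)
  subst hM hfstar₀
  have hdist := tendsto_infDist_setOf_isMinOn_of_subgradient_step hK hlip.continuous.continuousOn
    (fun y _ z _ => meanDist_sub_le_inner (hint y) (hint z)) (fun y _ => norm_meanUnitVec_le_one y)
    hxball hHx hrec (fun k => (htpos k).le) ht0 htsum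
  exact ⟨hdist, tendsto_of_tendsto_infDist_setOf_isMinOn hK hlip hy₀K hy₀ hxball hdist⟩

/-- Euclidean case of Theorem 4.6, first part: convergence of the
subgradient algorithm.  If `x_{k+1} = x_k - t_k H(x_k)/‖H(x_k)‖` with `t_k → 0` and
`∑ t_k = +∞`, then `infDist(x_k, 𝔐_μ) → 0` and `f(x_k) → f_*`. -/
theorem stmt13 {n : ℕ} (hn : 1 ≤ n) (a : EuclideanSpace ℝ (Fin n)) (ρ : ℝ) (hρ : 0 < ρ)
    (μ : Measure (EuclideanSpace ℝ (Fin n))) [IsProbabilityMeasure μ]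
    (hsupp : {x : EuclideanSpace ℝ (Fin n) | ∀ U ∈ nhds x, 0 < μ U} ⊆ ball a ρ)
    (f : EuclideanSpace ℝ (Fin n) → ℝ)
    (hf : ∀ x, f x = ∫ p, ‖x - p‖ ∂μ)
    (H : EuclideanSpace ℝ (Fin n) → EuclideanSpace ℝ (Fin n))
    (hH : ∀ x, H x = ∫ p in ({x}ᶜ : Set (EuclideanSpace ℝ (Fin n))), ‖x - p‖⁻¹ • (x - p) ∂μ)
    (fstar : ℝ) (hfstar : fstar = sInf (f '' closedBall a ρ))
    (M : Set (EuclideanSpace ℝ (Fin n)))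
    (hM : M = {y ∈ closedBall a ρ | IsMinOn f (closedBall a ρ) y})
    (x : ℕ → EuclideanSpace ℝ (Fin n)) (t : ℕ → ℝ)
    (hxball : ∀ k, x k ∈ closedBall a ρ)
    (hHx : ∀ k, H (x k) ≠ 0)
    (hrec : ∀ k, x (k + 1) = x k - (t k / ‖H (x k)‖) • H (x k))
    (htpos : ∀ k, 0 < t k)
    (ht0 : Tendsto t atTop (nhds 0))
    (htsum : Tendsto (fun m => ∑ k ∈ Finset.range m, t k) atTop atTop) :
    Tendsto (fun k => infDist (x k) M) atTop (nhds 0) ∧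
    Tendsto (fun k => f (x k)) atTop (nhds fstar) :=
  stmt13_general a ρ μ hsupp f hf H hH fstar hfstar M hM x t hxball hHx hrec htpos ht0 htsum
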